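/- arXiv:1001.5073 — 2 statements merged into one kernel-verified Lean document; each statement's English description precedes it below -/
import Mathlib

section
/- Let A be a real n×m matrix with n < m and let 1 ≤ n0 ≤ n. Suppose 0 ≤ δ < 1 is such that (1−δ)·‖s‖² ≤ ‖A s‖² for every s ∈ ℝ^m with at most n0 nonzero components (in particular, this holds when δ is the lower asymmetric restricted isometry constant δ_{n0}^{min} of A and δ_{n0}^{min} < 1). Then γ_A(n0) + 1 ≤ ‖A‖₂² / (1−δ), where ‖A‖₂ is the spectral norm of A. -/
/-!
Split a null vector as `s = x + y` with `x = π_I s` (at most `n0` nonzero entries) and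
`y = π_{Iᶜ} s`, so that `A x = -A y`. With `a = ‖x‖²` and `b = ‖y‖²`, the vector `v = b x - a y`
satisfies `A v = (a + b) A x` and `‖v‖² = a b (a + b)`, whence `(a + b) ‖A x‖² ≤ ‖A‖₂² a b`.
Together with the restricted lower bound `(1 - δ) a ≤ ‖A x‖²` this gives
`(1 - δ) (a + b) ≤ ‖A‖₂² b`, i.e. `a / b + 1 ≤ ‖A‖₂² / (1 - δ)`. The lower bound on a unit basis
vector gives `1 - δ ≤ ‖A‖₂²`, which handles the degenerate ratios and the supremum's junk value.
-/

open Finset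
open scoped BigOperators

noncomputable section

/-- Squared Euclidean norm of a vector. -/
def nsq {ι : Type*} [Fintype ι] (s : ι → ℝ) : ℝ := ∑ i, (s i) ^ 2

/-- The Unique Representation Property: every `n × n` submatrix of `A` is invertible. -/
def URP {n m : ℕ} (A : Matrix (Fin n) (Fin m) ℝ) : Prop :=
  ∀ g : Fin n → Fin m, Function.Injective g → IsUnit (A.submatrix id g)

/-- Number of nonzero components (the ℓ⁰ "norm"). -/
def l0 {ι : Type*} [Fintype ι] (s : ι → ℝ) : ℕ :=
  (Finset.univ.filter fun i => s i ≠ 0).card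

/-- Number of components with absolute value greater than σ. -/
def l0s {ι : Type*} [Fintype ι] (s : ι → ℝ) (σ : ℝ) : ℕ :=
  (Finset.univ.filter fun i => σ < |s i|).card

/-- The set of ratios ‖π_I(s)‖²/‖π_{Iᶜ}(s)‖² over index sets `I` with `|I| ≤ n0`
and nonzero null-space vectors `s`. -/
def gammaSet {n m : ℕ} (A : Matrix (Fin n) (Fin m) ℝ) (n0 : ℕ) : Set ℝ :=
  {r | ∃ (I : Finset (Fin m)) (s : Fin m → ℝ), I.card ≤ n0 ∧ A.mulVec s = 0 ∧ s ≠ 0 ∧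
    r = (∑ i ∈ I, (s i) ^ 2) / (∑ i ∈ Iᶜ, (s i) ^ 2)}

/-- γ_A(n0), the supremum of the above set of ratios. -/
def gammaA {n m : ℕ} (A : Matrix (Fin n) (Fin m) ℝ) (n0 : ℕ) : ℝ :=
  sSup (gammaSet A n0)

/-- Square of the largest singular value of a matrix (Rayleigh quotient form). -/
def sMaxSq {p q : Type*} [Fintype p] [Fintype q] (B : Matrix p q ℝ) : ℝ :=
  sSup {r | ∃ v : q → ℝ, nsq v = 1 ∧ r = nsq (B.mulVec v)}

/-- Square of the smallest singular value of a matrix with at least as many rows as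
columns (Rayleigh quotient form). -/
def sMinSq {p q : Type*} [Fintype p] [Fintype q] (B : Matrix p q ℝ) : ℝ :=
  sInf {r | ∃ v : q → ℝ, nsq v = 1 ∧ r = nsq (B.mulVec v)}

/-- The quadratic spline f_γ. -/
def fsp (γ u : ℝ) : ℝ :=
  if |u| ≤ 1 then 1 - u ^ 2 / (1 + γ)
  else if |u| ≤ 1 + γ then (|u| - γ - 1) ^ 2 / (γ ^ 2 + γ)
  else 0

/-- F_{γ,σ}(s) = Σ_i f_γ(s_i/σ). -/
def Fsp {m : ℕ} (γ σ : ℝ) (s : Fin m → ℝ) : ℝ := ∑ i, fsp γ (s i / σ)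

/-- The piecewise second derivative g_γ of f_γ. -/
def gsp (γ u : ℝ) : ℝ :=
  if |u| ≤ 1 then -2 / (1 + γ)
  else if |u| ≤ 1 + γ then 2 / (γ ^ 2 + γ)
  else 0

/-- The derivative f_γ′. -/
def fspDeriv (γ u : ℝ) : ℝ :=
  if |u| ≤ 1 then -2 * u / (1 + γ)
  else if |u| ≤ 1 + γ then 2 * (|u| - γ - 1) / (γ ^ 2 + γ) * Real.sign u
  else 0

/-- The gradient of F_{γ,σ}: its i-th component is (1/σ)·f_γ′(s_i/σ). -/
def gradF {m : ℕ} (γ σ : ℝ) (s : Fin m → ℝ) : Fin m → ℝ :=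
  fun i => fspDeriv γ (s i / σ) / σ

/-- The lower asymmetric restricted isometry constant δ_k^{min} of `A`. -/
def aricMin {n m : ℕ} (A : Matrix (Fin n) (Fin m) ℝ) (k : ℕ) : ℝ :=
  sInf {δ : ℝ | 0 ≤ δ ∧ ∀ s : Fin m → ℝ, l0 s ≤ k → (1 - δ) * nsq s ≤ nsq (A.mulVec s)}

end

open scoped Matrix

section

variable {ι p q : Type*} [Fintype ι] [Fintype p] [Fintype q]

lemma nsq_nonneg (v : ι → ℝ) : 0 ≤ nsq v :=
  Finset.sum_nonneg fun i _ => sq_nonneg (v i)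

lemma nsq_smul (c : ℝ) (v : ι → ℝ) : nsq (c • v) = c ^ 2 * nsq v := by
  simp only [nsq, Pi.smul_apply, smul_eq_mul, mul_pow, Finset.mul_sum]

lemma nsq_add_of_mul_eq_zero {x y : ι → ℝ} (h : ∀ i, x i * y i = 0) :
    nsq (x + y) = nsq x + nsq y := by
  simp only [nsq, Pi.add_apply, ← Finset.sum_add_distrib]
  exact Finset.sum_congr rfl fun i _ => by linear_combination 2 * h i

lemma nsq_piecewise_zero [DecidableEq ι] (I : Finset ι) (s : ι → ℝ) :
    nsq (I.piecewise s 0) = ∑ i ∈ I, s i ^ 2 := by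
  simp [nsq, Finset.piecewise, apply_ite (· ^ 2), Finset.sum_ite_mem]

lemma l0_piecewise_zero_le [DecidableEq ι] (I : Finset ι) (s : ι → ℝ) :
    l0 (I.piecewise s 0) ≤ I.card := by
  refine Finset.card_le_card fun i hi => ?_
  by_contra hiI
  simp [hiI] at hi

lemma nsq_mulVec_le_sum_sq_mul (A : Matrix p q ℝ) (v : q → ℝ) :
    nsq (A *ᵥ v) ≤ (∑ i, ∑ j, A i j ^ 2) * nsq v := by
  rw [nsq, Finset.sum_mul]
  exact Finset.sum_le_sum fun i _ => Finset.sum_mul_sq_le_sq_mul_sq _ _ _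

lemma bddAbove_nsq_mulVec_sphere (A : Matrix p q ℝ) :
    BddAbove {r | ∃ v : q → ℝ, nsq v = 1 ∧ r = nsq (A *ᵥ v)} := by
  refine ⟨∑ i, ∑ j, A i j ^ 2, ?_⟩
  rintro r ⟨v, hv, rfl⟩
  simpa [hv] using nsq_mulVec_le_sum_sq_mul A v

lemma nsq_mulVec_le_sMaxSq_mul (A : Matrix p q ℝ) (v : q → ℝ) :
    nsq (A *ᵥ v) ≤ sMaxSq A * nsq v := by
  rcases (nsq_nonneg v).eq_or_lt with hv | hv
  · simpa [← hv] using nsq_mulVec_le_sum_sq_mul A v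
  set c := Real.sqrt (nsq v)
  have hc : c ^ 2 = nsq v := Real.sq_sqrt hv.le
  have hu : nsq (c⁻¹ • v) = 1 := by
    rw [nsq_smul, inv_pow, hc, inv_mul_cancel₀ hv.ne']
  have h : nsq (A *ᵥ (c⁻¹ • v)) ≤ sMaxSq A := le_csSup (bddAbove_nsq_mulVec_sphere A) ⟨_, hu, rfl⟩
  rwa [Matrix.mulVec_smul, nsq_smul, inv_pow, hc, inv_mul_le_iff₀ hv, mul_comm] at h

lemma le_sMaxSq_of_forall_sparse [Nonempty q] (A : Matrix p q ℝ) {k : ℕ} (hk : 1 ≤ k) {c : ℝ}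
    (hA : ∀ s : q → ℝ, l0 s ≤ k → c * nsq s ≤ nsq (A *ᵥ s)) : c ≤ sMaxSq A := by
  classical
  obtain ⟨j⟩ := ‹Nonempty q›
  have he : nsq (Pi.single j 1 : q → ℝ) = 1 := by
    simp [nsq, Pi.single_apply]
  have hl0 : l0 (Pi.single j 1 : q → ℝ) ≤ k := by
    refine le_trans (Finset.card_le_one.2 fun a ha b hb => ?_) hk
    simp_all [Pi.single_apply]
  simpa [he] using (hA _ hl0).trans (nsq_mulVec_le_sMaxSq_mul A _)

lemma nsq_add_nsq_mul_nsq_mulVec_le (A : Matrix p q ℝ) {x y : q → ℝ} (hxy : ∀ i, x i * y i = 0)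
    (hA : A *ᵥ (x + y) = 0) :
    (nsq x + nsq y) * nsq (A *ᵥ x) ≤ sMaxSq A * (nsq x * nsq y) := by
  set a := nsq x
  set b := nsq y
  have hAy : A *ᵥ y = -(A *ᵥ x) := by
    rw [Matrix.mulVec_add] at hA
    exact eq_neg_of_add_eq_zero_right hA
  have hAv : A *ᵥ (b • x + (-a) • y) = (a + b) • A *ᵥ x := by
    rw [Matrix.mulVec_add, Matrix.mulVec_smul, Matrix.mulVec_smul, hAy]
    module
  have hv : nsq (b • x + (-a) • y) = a * b * (a + b) := by
    rw [nsq_add_of_mul_eq_zero fun i => by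
      simp only [Pi.smul_apply, smul_eq_mul]; linear_combination (-(a * b)) * hxy i, nsq_smul, nsq_smul]
    ring
  have key : (a + b) * ((a + b) * nsq (A *ᵥ x)) ≤ (a + b) * (sMaxSq A * (a * b)) := by
    have h := nsq_mulVec_le_sMaxSq_mul A (b • x + (-a) • y)
    rw [hAv, nsq_smul, hv] at h
    linarith
  rcases (add_nonneg (nsq_nonneg x) (nsq_nonneg y) : 0 ≤ a + b).eq_or_lt with hab | hab
  · obtain ⟨ha0, hb0⟩ : a = 0 ∧ b = 0 := by
      constructor <;> linarith [nsq_nonneg x, nsq_nonneg y]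
    simp [ha0, hb0]
  · exact le_of_mul_le_mul_left key hab

lemma sum_sq_div_sum_sq_compl_le [DecidableEq q] {A : Matrix p q ℝ} {k : ℕ} {c : ℝ}
    (hc : 0 < c) (hcA : c ≤ sMaxSq A)
    (hA : ∀ s : q → ℝ, l0 s ≤ k → c * nsq s ≤ nsq (A *ᵥ s))
    {I : Finset q} (hI : I.card ≤ k) {s : q → ℝ} (hs : A *ᵥ s = 0) :
    (∑ i ∈ I, s i ^ 2) / (∑ i ∈ Iᶜ, s i ^ 2) ≤ sMaxSq A / c - 1 := by
  have hbound : 0 ≤ sMaxSq A / c - 1 := sub_nonneg.2 ((one_le_div hc).2 hcA)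
  set x := I.piecewise s 0
  set y := Iᶜ.piecewise s 0
  have hxy : ∀ i, x i * y i = 0 := fun i => by by_cases hi : i ∈ I <;> simp [x, y, hi]
  have hsum : x + y = s := by ext i; by_cases hi : i ∈ I <;> simp [x, y, hi]
  have hsplit := nsq_add_nsq_mul_nsq_mulVec_le A hxy (hsum ▸ hs)
  have hsparse := hA x ((l0_piecewise_zero_le I s).trans hI)
  rw [nsq_piecewise_zero, nsq_piecewise_zero] at hsplit
  rw [nsq_piecewise_zero] at hsparse
  have ha := Finset.sum_nonneg fun i (_ : i ∈ I) => sq_nonneg (s i)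
  have hb := Finset.sum_nonneg fun i (_ : i ∈ Iᶜ) => sq_nonneg (s i)
  generalize ∑ i ∈ I, s i ^ 2 = a at *
  generalize ∑ i ∈ Iᶜ, s i ^ 2 = b at *
  rcases hb.eq_or_lt with hb | hb
  · rwa [← hb, div_zero]
  rcases ha.eq_or_lt with ha | ha
  · rwa [← ha, zero_div]
  have hcab : c * (a + b) ≤ sMaxSq A * b := by
    refine le_of_mul_le_mul_left ?_ ha
    calc a * (c * (a + b)) = (a + b) * (c * a) := by ring
      _ ≤ (a + b) * nsq (A *ᵥ x) := mul_le_mul_of_nonneg_left hsparse (add_pos ha hb).le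
      _ ≤ sMaxSq A * (a * b) := hsplit
      _ = a * (sMaxSq A * b) := by ring
  rw [le_sub_iff_add_le, div_add_one hb.ne', div_le_div_iff₀ hb hc]
  linarith

end

theorem stmt_2_general {n m : ℕ} (hnm : n < m) (A : Matrix (Fin n) (Fin m) ℝ)
    (n0 : ℕ) (hn1 : 1 ≤ n0) (δ : ℝ) (hδ1 : δ < 1)
    (hRIP : ∀ s : Fin m → ℝ, l0 s ≤ n0 → (1 - δ) * nsq s ≤ nsq (A.mulVec s)) :
    gammaA A n0 + 1 ≤ sMaxSq A / (1 - δ) := by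
  have hc : 0 < 1 - δ := sub_pos.2 hδ1
  have : Nonempty (Fin m) := ⟨⟨0, by omega⟩⟩
  have hcA := le_sMaxSq_of_forall_sparse A hn1 hRIP
  rw [gammaA, ← le_sub_iff_add_le]
  refine Real.sSup_le ?_ (sub_nonneg.2 ((one_le_div hc).2 hcA))
  rintro r ⟨I, s, hI, hs, -, rfl⟩
  exact sum_sq_div_sum_sq_compl_le hc hcA hRIP hI hs

/-- if (1−δ)‖s‖² ≤ ‖As‖² for all n0-sparse s, with 0 ≤ δ < 1, then
γ_A(n0) + 1 ≤ ‖A‖₂²/(1−δ). -/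
theorem stmt_2 {n m : ℕ} (hnm : n < m) (A : Matrix (Fin n) (Fin m) ℝ)
    (n0 : ℕ) (hn1 : 1 ≤ n0) (hn0 : n0 ≤ n) (δ : ℝ) (hδ0 : 0 ≤ δ) (hδ1 : δ < 1)
    (hRIP : ∀ s : Fin m → ℝ, l0 s ≤ n0 → (1 - δ) * nsq s ≤ nsq (A.mulVec s)) :
    gammaA A n0 + 1 ≤ sMaxSq A / (1 - δ) :=
  stmt_2_general hnm A n0 hn1 δ hδ1 hRIP
end

section
/- Let A be a real n×m matrix with n < m satisfying the URP, let 1 ≤ n0 ≤ n, let γ = γ_A(n0) (finite and positive), σ > 0, and x ∈ ℝⁿ. If s1, s2 ∈ S_x satisfy F_{γ,σ}(s_i) ≥ m − n0/(2+2γ) for i = 1,2, then ‖s1 − s2‖ ≤ 2·√(m(γ+1))·σ. Moreover, if s2 = s0 where s0 ∈ S_x has at most n0/2 nonzero components, then the stricter bound ‖s1 − s0‖ ≤ √(m(γ+1))·σ holds. -/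
open Finset
open scoped BigOperators

/-!
On the set of components with `|s i| > σ` each term of `F_{γ,σ}(s)` falls short of `1` by at
least `1 / (1 + γ)`, so `F_{γ,σ}(s) ≥ m - n0 / (2 + 2γ)` leaves at most `n0 / 2` such
components. Hence `d = s1 - s2`, which lies in the null space of `A`, is bounded by `2σ`
(by `σ` when the support of `s2` has at most `n0 / 2` elements) outside a set `I` of at most
`n0` indices. By definition of `γ_A(n0)`, `‖π_I d‖² ≤ γ ‖π_{Iᶜ} d‖²`, the URP ruling out the
degenerate ratio with `π_{Iᶜ} d = 0 ≠ d`; so `‖d‖² ≤ (γ + 1) m c²` with `c` the bound off `I`.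
-/

open scoped Matrix

section Spline

variable {γ : ℝ}

lemma one_div_one_add_le_one_sub_fsp (hγ : 0 < γ) {u : ℝ} (hu : 1 < |u|) :
    1 / (1 + γ) ≤ 1 - fsp γ u := by
  have hsplit : 1 - 1 / (1 + γ) = γ / (1 + γ) := by field_simp; ring
  suffices fsp γ u ≤ γ / (1 + γ) by linarith
  rw [fsp, if_neg hu.not_ge]
  split_ifs with hu'
  · rw [div_le_div_iff₀ (by positivity) (by positivity)]
    nlinarith [mul_nonneg (sub_nonneg.2 hu.le) (by linarith : 0 ≤ 1 + 2 * γ - |u|)]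
  · positivity

lemma fsp_le_one (hγ : 0 < γ) (u : ℝ) : fsp γ u ≤ 1 := by
  rcases le_or_gt |u| 1 with hu | hu
  · rw [fsp, if_pos hu]
    have : 0 ≤ u ^ 2 / (1 + γ) := by positivity
    linarith
  · have : 0 ≤ 1 / (1 + γ) := by positivity
    linarith [one_div_one_add_le_one_sub_fsp hγ hu]

variable {σ : ℝ} {m : ℕ}

lemma l0s_div_le_sub_Fsp (hγ : 0 < γ) (hσ : 0 < σ) (s : Fin m → ℝ) :
    (l0s s σ : ℝ) / (1 + γ) ≤ m - Fsp γ σ s := by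
  set T := univ.filter fun i => σ < |s i|
  calc (l0s s σ : ℝ) / (1 + γ) = ∑ _i ∈ T, 1 / (1 + γ) := by
        rw [sum_const, nsmul_eq_mul, l0s, mul_one_div]
    _ ≤ ∑ i ∈ T, (1 - fsp γ (s i / σ)) := sum_le_sum fun i hi => by
        refine one_div_one_add_le_one_sub_fsp hγ ?_
        rw [abs_div, abs_of_pos hσ, one_lt_div hσ]
        exact (mem_filter.1 hi).2
    _ ≤ ∑ i, (1 - fsp γ (s i / σ)) :=
        sum_le_sum_of_subset_of_nonneg (subset_univ T)
          fun i _ _ => sub_nonneg.2 (fsp_le_one hγ _)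
    _ = m - Fsp γ σ s := by simp [Fsp]

lemma l0s_le_half_of_le_Fsp {n0 : ℕ} (hγ : 0 < γ) (hσ : 0 < σ) {s : Fin m → ℝ}
    (hF : (m : ℝ) - n0 / (2 + 2 * γ) ≤ Fsp γ σ s) : (l0s s σ : ℝ) ≤ n0 / 2 := by
  have h := (l0s_div_le_sub_Fsp hγ hσ s).trans (sub_le_comm.1 hF)
  rwa [show (2 + 2 * γ) = 2 * (1 + γ) by ring, ← div_div,
    div_le_div_iff_of_pos_right (by positivity)] at h

end Spline

section NullSpace

variable {n m : ℕ} {A : Matrix (Fin n) (Fin m) ℝ}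

lemma URP.eq_zero_of_mulVec_eq_zero (hA : URP A) (hnm : n ≤ m) {d : Fin m → ℝ}
    (hd : A *ᵥ d = 0) {I : Finset (Fin m)} (hI : #I ≤ n) (hdI : ∀ i ∉ I, d i = 0) :
    d = 0 := by
  obtain ⟨J, hIJ, hJ⟩ := exists_superset_card_eq hI (by simpa using hnm)
  have hdJ : ∀ i ∉ J, d i = 0 := fun i hi => hdI i fun hiI => hi (hIJ hiI)
  let e : Fin n ≃ J := (J.orderIsoOfFin hJ).toEquiv
  let g : Fin n → Fin m := fun k => e k
  have hg : g.Injective := Subtype.val_injective.comp e.injective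
  have hsub : (A.submatrix id g) *ᵥ (d ∘ g) = 0 := by
    ext j
    calc ∑ k, A j (g k) * d (g k) = ∑ i ∈ J, A j i * d i :=
          (e.sum_comp fun i : J => A j i * d i).trans (sum_coe_sort J fun i => A j i * d i)
      _ = ∑ i, A j i * d i :=
          sum_subset (subset_univ J) fun i _ hi => by rw [hdJ i hi, mul_zero]
      _ = 0 := congrFun hd j
  have hdg : d ∘ g = 0 :=
    Matrix.mulVec_injective_iff_isUnit.2 (hA g hg) (by rw [hsub, Matrix.mulVec_zero])
  ext i
  by_cases hi : i ∈ J
  · simpa [g] using congrFun hdg (e.symm ⟨i, hi⟩)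
  · exact hdJ i hi

variable {n0 : ℕ} {d : Fin m → ℝ} {I : Finset (Fin m)}

lemma sum_sq_le_gammaA_mul_sum_compl (hA : URP A) (hnm : n ≤ m) (hn0 : n0 ≤ n)
    (hbdd : BddAbove (gammaSet A n0)) (hd : A *ᵥ d = 0) (hI : #I ≤ n0) :
    ∑ i ∈ I, d i ^ 2 ≤ gammaA A n0 * ∑ i ∈ Iᶜ, d i ^ 2 := by
  by_cases hd0 : d = 0
  · simp [hd0]
  have hpos : 0 < ∑ i ∈ Iᶜ, d i ^ 2 := by
    refine (sum_nonneg fun i _ => sq_nonneg (d i)).lt_of_ne fun h => hd0 ?_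
    refine hA.eq_zero_of_mulVec_eq_zero hnm hd (hI.trans hn0) fun i hi => ?_
    exact pow_eq_zero_iff two_ne_zero |>.1 <|
      (sum_eq_zero_iff_of_nonneg fun i _ => sq_nonneg (d i)).1 h.symm i (mem_compl.2 hi)
  rw [← div_le_iff₀ hpos]
  exact le_csSup hbdd ⟨I, d, hI, hd, hd0, rfl⟩

lemma nsq_le_of_mulVec_eq_zero (hA : URP A) (hnm : n ≤ m) (hn0 : n0 ≤ n)
    (hγ : 0 ≤ gammaA A n0) (hbdd : BddAbove (gammaSet A n0)) (hd : A *ᵥ d = 0)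
    (hI : #I ≤ n0) {c : ℝ} (hc : ∀ i ∉ I, |d i| ≤ c) :
    nsq d ≤ m * (gammaA A n0 + 1) * c ^ 2 := by
  have hcompl : ∑ i ∈ Iᶜ, d i ^ 2 ≤ m * c ^ 2 :=
    calc ∑ i ∈ Iᶜ, d i ^ 2 ≤ ∑ _i ∈ Iᶜ, c ^ 2 := sum_le_sum fun i hi => by
          rw [← sq_abs]
          exact pow_le_pow_left₀ (abs_nonneg _) (hc i (mem_compl.1 hi)) 2
      _ = #Iᶜ * c ^ 2 := by rw [sum_const, nsmul_eq_mul]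
      _ ≤ m * c ^ 2 := by
          gcongr
          exact_mod_cast (card_le_univ Iᶜ).trans (Fintype.card_fin m).le
  calc nsq d = ∑ i ∈ I, d i ^ 2 + ∑ i ∈ Iᶜ, d i ^ 2 := (sum_add_sum_compl I _).symm
    _ ≤ (gammaA A n0 + 1) * ∑ i ∈ Iᶜ, d i ^ 2 := by
        linarith [sum_sq_le_gammaA_mul_sum_compl hA hnm hn0 hbdd hd hI]
    _ ≤ (gammaA A n0 + 1) * (m * c ^ 2) := by gcongr
    _ = m * (gammaA A n0 + 1) * c ^ 2 := by ring

lemma sqrt_nsq_le_of_mulVec_eq_zero (hA : URP A) (hnm : n ≤ m) (hn0 : n0 ≤ n)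
    (hγ : 0 ≤ gammaA A n0) (hbdd : BddAbove (gammaSet A n0)) (hd : A *ᵥ d = 0)
    (hI : #I ≤ n0) {c : ℝ} (hc0 : 0 ≤ c) (hc : ∀ i ∉ I, |d i| ≤ c) :
    √(nsq d) ≤ √(m * (gammaA A n0 + 1)) * c := by
  rw [← Real.sqrt_sq hc0, ← Real.sqrt_mul (by positivity)]
  exact Real.sqrt_le_sqrt (nsq_le_of_mulVec_eq_zero hA hnm hn0 hγ hbdd hd hI hc)

end NullSpace

lemma card_union_le_of_le_half {α : Type*} [DecidableEq α] {S T : Finset α} {k : ℕ}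
    (hS : (#S : ℝ) ≤ k / 2) (hT : (#T : ℝ) ≤ k / 2) : #(S ∪ T) ≤ k := by
  have : (#S + #T : ℝ) ≤ k := by linarith
  exact (card_union_le S T).trans (by exact_mod_cast this)

theorem stmt_10_general {n m : ℕ} (hnm : n < m) (A : Matrix (Fin n) (Fin m) ℝ)
    (hURP : URP A) (n0 : ℕ) (hn0 : n0 ≤ n)
    (γ : ℝ) (hγ : γ = gammaA A n0) (hγpos : 0 < γ) (hbdd : BddAbove (gammaSet A n0))
    (σ : ℝ) (hσ : 0 < σ) (x : Fin n → ℝ)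
    (s1 s2 : Fin m → ℝ) (hs1x : A.mulVec s1 = x) (hs2x : A.mulVec s2 = x)
    (hF1 : (m : ℝ) - n0 / (2 + 2 * γ) ≤ Fsp γ σ s1)
    (hF2 : (m : ℝ) - n0 / (2 + 2 * γ) ≤ Fsp γ σ s2) :
    Real.sqrt (nsq (s1 - s2)) ≤ 2 * Real.sqrt (m * (γ + 1)) * σ ∧
      ((l0 s2 : ℝ) ≤ n0 / 2 →
        Real.sqrt (nsq (s1 - s2)) ≤ Real.sqrt (m * (γ + 1)) * σ) := by
  subst hγ
  have hd : A *ᵥ (s1 - s2) = 0 := by rw [Matrix.mulVec_sub, hs1x, hs2x, sub_self]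
  have hl0s1 := l0s_le_half_of_le_Fsp hγpos hσ hF1
  have hbound := fun {I} {c} =>
    sqrt_nsq_le_of_mulVec_eq_zero (I := I) (c := c) hURP hnm.le hn0 hγpos.le hbdd hd
  refine ⟨?_, fun hl0s2 => ?_⟩
  · have := hbound (card_union_le_of_le_half hl0s1 (l0s_le_half_of_le_Fsp hγpos hσ hF2))
      (by positivity : 0 ≤ 2 * σ) fun i hi => by
        simp only [mem_union, mem_filter, mem_univ, true_and, not_or, not_lt] at hi
        exact (abs_sub _ _).trans (by linarith)
    linarith
  · refine hbound (card_union_le_of_le_half hl0s1 hl0s2) hσ.le fun i hi => ?_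
    simp only [mem_union, mem_filter, mem_univ, true_and, not_or, not_lt, not_not] at hi
    simpa [hi.2] using hi.1

/-- two points of S_x on which F_{γ,σ} ≥ m − n0/(2+2γ) lie within
Euclidean distance 2√(m(γ+1))σ of each other; if moreover the second point has at most
n0/2 nonzero components, the distance is at most √(m(γ+1))σ. -/
theorem stmt_10 {n m : ℕ} (hnm : n < m) (A : Matrix (Fin n) (Fin m) ℝ)
    (hURP : URP A) (n0 : ℕ) (hn1 : 1 ≤ n0) (hn0 : n0 ≤ n)
    (γ : ℝ) (hγ : γ = gammaA A n0) (hγpos : 0 < γ) (hbdd : BddAbove (gammaSet A n0))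
    (σ : ℝ) (hσ : 0 < σ) (x : Fin n → ℝ)
    (s1 s2 : Fin m → ℝ) (hs1x : A.mulVec s1 = x) (hs2x : A.mulVec s2 = x)
    (hF1 : (m : ℝ) - n0 / (2 + 2 * γ) ≤ Fsp γ σ s1)
    (hF2 : (m : ℝ) - n0 / (2 + 2 * γ) ≤ Fsp γ σ s2) :
    Real.sqrt (nsq (s1 - s2)) ≤ 2 * Real.sqrt (m * (γ + 1)) * σ ∧
      ((l0 s2 : ℝ) ≤ n0 / 2 →
        Real.sqrt (nsq (s1 - s2)) ≤ Real.sqrt (m * (γ + 1)) * σ) :=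
  stmt_10_general hnm A hURP n0 hn0 γ hγ hγpos hbdd σ hσ x s1 s2 hs1x hs2x hF1 hF2
end
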